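/- Let p : ℝ → ℝ be twice continuously differentiable, 1-periodic, with p(x) > 0 for all x and ∫₀¹ p(x) dx = 1; let a : ℝ → ℝ be continuously differentiable and 1-periodic; let c̃ ∈ ℝ; let I be a finite index set and for each i ∈ I let b_i : ℝ → ℝ be twice continuously differentiable and 1-periodic. Assume the stationary Fokker–Planck equation (1/2)·(Σ_{i∈I} b_i²·p)″(x) = ((c̃ + a)·p)′(x) holds for all x ∈ ℝ, and assume there exist i₁, i₂ ∈ I such that b_{i₁} and b_{i₂} are linearly independent as functions from ℝ to ℝ. Then ∫₀¹ ( a′(x) − (1/2)·Σ_{i∈I} b_i′(x)² )·p(x) dx < 0. -/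

import Mathlib

/-!
Write `q = (∑ bᵢ²) p`. Integrating the Fokker–Planck equation once, the flux
`K = q'/2 - (c̃ + a) p` is constant. Using this, the Lyapunov integrand plus the dissipation
`(1/2) ∑ ((bᵢ p)')² / p` equals `((c̃ + a) p)' + K p'/p = (q'/2 + K log p)'`, the derivative of a
periodic function, so the Lyapunov integral is minus the dissipation. Zero dissipation would make
every `bᵢ p` constant, so all `bᵢ` would be multiples of `1 / p` and no two of them linearly
independent.
-/

open MeasureTheory intervalIntegral Set Function Finset

theorem Function.Periodic.deriv {𝕜 F : Type*} [NontriviallyNormedField 𝕜] [NormedAddCommGroup F]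
    [NormedSpace 𝕜 F] {f : 𝕜 → F} {c : 𝕜} (h : Periodic f c) : Periodic (deriv f) c := fun x => by
  rw [← deriv_comp_add_const, h.funext]

namespace Function.Periodic

variable {f f' g : ℝ → ℝ} {c : ℝ}

theorem integral_eq_zero_of_hasDerivAt (h : Periodic f c) (hf : ∀ x, HasDerivAt f (f' x) x)
    (hint : IntervalIntegrable f' volume 0 c) : ∫ x in 0..c, f' x = 0 := by
  have hc : f c = f 0 := by simpa using h 0
  rw [integral_eq_sub_of_hasDerivAt (fun x _ => hf x) hint, hc, sub_self]

theorem eq_zero_of_integral_eq_zero (h : Periodic g c) (hc : 0 < c) (hg : Continuous g)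
    (hnonneg : ∀ x, 0 ≤ g x) (hint : ∫ x in 0..c, g x = 0) (x : ℝ) : g x = 0 := by
  obtain ⟨y, hy, hxy⟩ := h.exists_mem_Ico₀ hc x
  by_contra hne
  have hpos : ∫ _ in 0..c, (0 : ℝ) < ∫ x in 0..c, g x :=
    integral_lt_integral_of_continuousOn_of_le_of_exists_lt hc continuousOn_const hg.continuousOn
      (fun x _ => hnonneg x) ⟨y, Ico_subset_Icc_self hy, (hnonneg y).lt_of_ne (hxy ▸ Ne.symm hne)⟩
  simp [hint] at hpos

end Function.Periodic

theorem eq_of_integral_sq_deriv_div_eq_zero {ψ p : ℝ → ℝ} {c : ℝ} (hψ : Periodic ψ c) (hp : Periodic p c)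
    (hc : 0 < c) (hψd : ContDiff ℝ 1 ψ) (hpc : Continuous p) (hppos : ∀ x, 0 < p x)
    (hint : ∫ x in 0..c, deriv ψ x ^ 2 / p x = 0) (x y : ℝ) : ψ x = ψ y := by
  have hzero := Periodic.eq_zero_of_integral_eq_zero (g := fun x => deriv ψ x ^ 2 / p x)
    (fun x => by simp only [hψ.deriv x, hp x]) hc
    ((hψd.continuous_deriv_one.pow 2).div hpc fun x => (hppos x).ne')
    (fun x => div_nonneg (sq_nonneg _) (hppos x).le) hint
  refine is_const_of_deriv_eq_zero (hψd.differentiable one_ne_zero) (fun x => ?_) x y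
  simpa [(hppos x).ne'] using hzero x

theorem not_linearIndependent_pair_of_mul_eq_const {K X : Type*} [Field K] {f₁ f₂ p : X → K}
    {c₁ c₂ : K} (hp : ∀ x, p x ≠ 0) (h₁ : ∀ x, f₁ x * p x = c₁) (h₂ : ∀ x, f₂ x * p x = c₂) :
    ¬ LinearIndependent K ![f₁, f₂] := by
  intro hli
  have hdep : c₂ • f₁ + (-c₁) • f₂ = 0 := funext fun x => mul_right_cancel₀ (hp x) <| by
    simp only [Pi.add_apply, Pi.smul_apply, smul_eq_mul, Pi.zero_apply]
    linear_combination c₂ * h₁ x - c₁ * h₂ x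
  obtain ⟨-, hc₁⟩ := LinearIndependent.pair_iff.mp hli c₂ (-c₁) hdep
  have hf₁ : f₁ = 0 := funext fun x => by
    simpa [hp x, neg_eq_zero.mp hc₁] using h₁ x
  exact hli.ne_zero 0 hf₁

theorem sum_sq_div_sub_sum_sq_mul {ι : Type*} (s : Finset ι) (B B' : ι → ℝ) {P : ℝ} (P' : ℝ)
    (hP : P ≠ 0) :
    ∑ i ∈ s, (B' i * P + B i * P') ^ 2 / P - (∑ i ∈ s, B' i ^ 2) * P
      = P' / P * ((∑ i ∈ s, 2 * B i * B' i) * P + (∑ i ∈ s, B i ^ 2) * P') := by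
  simp only [Finset.sum_mul, Finset.mul_sum, ← Finset.sum_sub_distrib, ← Finset.sum_add_distrib]
  refine Finset.sum_congr rfl fun i _ => ?_
  field_simp
  ring

noncomputable def dissipation (ψ p : ℝ → ℝ) : ℝ :=
  ∫ x in 0..1, deriv (fun y => ψ y * p y) x ^ 2 / p x

section FokkerPlanck

variable {I : Type*} [Fintype I] {p a : ℝ → ℝ} {c : ℝ} {b : I → ℝ → ℝ}

theorem hasDerivAt_sum_sq_mul {x : ℝ} (hb : ∀ i, DifferentiableAt ℝ (b i) x)
    (hp : DifferentiableAt ℝ p x) :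
    HasDerivAt (fun y => (∑ i, b i y ^ 2) * p y)
      ((∑ i, 2 * b i x * deriv (b i) x) * p x + (∑ i, b i x ^ 2) * deriv p x) x := by
  refine (HasDerivAt.fun_sum fun i _ => ?_).mul hp.hasDerivAt
  simpa using (hb i).hasDerivAt.fun_pow 2

theorem exists_flux_eq_const (hp : ContDiff ℝ 2 p) (ha : Differentiable ℝ a)
    (hb : ∀ i, ContDiff ℝ 2 (b i))
    (hFP : ∀ x, (1/2) * deriv (deriv (fun y => (∑ i, b i y ^ 2) * p y)) x
      = deriv (fun y => (c + a y) * p y) x) :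
    ∃ K, ∀ x, (1/2) * deriv (fun y => (∑ i, b i y ^ 2) * p y) x - (c + a x) * p x = K := by
  have hq : ContDiff ℝ 2 (fun y => (∑ i, b i y ^ 2) * p y) := by fun_prop
  have hp' : Differentiable ℝ p := hp.differentiable two_ne_zero
  have hflux : Differentiable ℝ
      (fun x => (1/2) * deriv (fun y => (∑ i, b i y ^ 2) * p y) x - (c + a x) * p x) := by
    have := hq.differentiable_deriv_two
    fun_prop
  refine ⟨_, fun x => is_const_of_deriv_eq_zero hflux (fun x => ?_) x 0⟩
  rw [deriv_fun_sub (by fun_prop) (by fun_prop), deriv_const_mul _ (by fun_prop), hFP, sub_self]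

theorem lyapunov_add_dissipation_eq {x K : ℝ} (hb : ∀ i, DifferentiableAt ℝ (b i) x)
    (hp : DifferentiableAt ℝ p x) (hp0 : p x ≠ 0) (ha : DifferentiableAt ℝ a x)
    (hK : (1/2) * deriv (fun y => (∑ i, b i y ^ 2) * p y) x - (c + a x) * p x = K) :
    (deriv a x - (1/2) * ∑ i, deriv (b i) x ^ 2) * p x
        + (1/2) * ∑ i, deriv (fun y => b i y * p y) x ^ 2 / p x
      = deriv (fun y => (c + a y) * p y) x + K * (deriv p x / p x) := by
  have key := sum_sq_div_sub_sum_sq_mul univ (fun i => b i x) (fun i => deriv (b i) x)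
    (deriv p x) hp0
  rw [(hasDerivAt_sum_sq_mul hb hp).deriv] at hK
  simp only [deriv_fun_mul (hb _) hp, deriv_fun_mul (ha.const_add c) hp, deriv_const_add]
  have hcancel : p x * (deriv p x / p x) = deriv p x := mul_div_cancel₀ _ hp0
  rw [← hK]
  linear_combination (1/2) * key + (c + a x) * hcancel

theorem integral_lyapunov_eq_neg_half_sum_dissipation (hp : ContDiff ℝ 2 p) (hpper : Periodic p 1)
    (hppos : ∀ x, 0 < p x) (ha : ContDiff ℝ 1 a) (hb : ∀ i, ContDiff ℝ 2 (b i))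
    (hbper : ∀ i, Periodic (b i) 1)
    (hFP : ∀ x, (1/2) * deriv (deriv (fun y => (∑ i, b i y ^ 2) * p y)) x
      = deriv (fun y => (c + a y) * p y) x) :
    ∫ x in 0..1, (deriv a x - (1/2) * ∑ i, deriv (b i) x ^ 2) * p x
      = -(1/2) * ∑ i, dissipation (b i) p := by
  obtain ⟨K, hK⟩ := exists_flux_eq_const hp (ha.differentiable one_ne_zero) hb hFP
  have hq : ContDiff ℝ 2 (fun y => (∑ i, b i y ^ 2) * p y) := by fun_prop
  have hqper : Periodic (fun y => (∑ i, b i y ^ 2) * p y) 1 := fun x => by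
    simp only [hbper _ x, hpper x]
  have hp' := hp.differentiable two_ne_zero
  have hG : ∀ x, HasDerivAt
      (fun x => (1/2) * deriv (fun y => (∑ i, b i y ^ 2) * p y) x + K * Real.log (p x))
      ((deriv a x - (1/2) * ∑ i, deriv (b i) x ^ 2) * p x
        + (1/2) * ∑ i, deriv (fun y => b i y * p y) x ^ 2 / p x) x := fun x => by
    rw [lyapunov_add_dissipation_eq (fun i => (hb i).differentiable two_ne_zero x) (hp' x)
      (hppos x).ne' (ha.differentiable one_ne_zero x) (hK x), ← hFP x]
    exact ((hq.differentiable_deriv_two x).hasDerivAt.const_mul _).add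
      (((hp' x).hasDerivAt.log (hppos x).ne').const_mul K)
  have hGper : Periodic
      (fun x => (1/2) * deriv (fun y => (∑ i, b i y ^ 2) * p y) x + K * Real.log (p x)) 1 :=
    fun x => by simp only [hqper.deriv x, hpper x]
  have hT : Continuous fun x => (deriv a x - (1/2) * ∑ i, deriv (b i) x ^ 2) * p x := by
    have := fun i => (hb i).continuous_deriv one_le_two
    have := ha.continuous_deriv_one
    fun_prop
  have hS : ∀ i, Continuous fun x => deriv (fun y => b i y * p y) x ^ 2 / p x := fun i =>
    ((((hb i).mul hp).continuous_deriv one_le_two).pow 2).div hp.continuous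
      fun x => (hppos x).ne'
  have hS' : Continuous fun x => (1/2) * ∑ i, deriv (fun y => b i y * p y) x ^ 2 / p x :=
    continuous_const.mul (continuous_finsetSum _ fun i _ => hS i)
  have hzero := hGper.integral_eq_zero_of_hasDerivAt hG ((hT.add hS').intervalIntegrable 0 1)
  rw [integral_add (hT.intervalIntegrable 0 1) (hS'.intervalIntegrable 0 1),
    intervalIntegral.integral_const_mul,
    integral_finsetSum fun i _ => (hS i).intervalIntegrable 0 1] at hzero
  simp only [dissipation]
  linarith

theorem sum_dissipation_pos (hp : ContDiff ℝ 1 p) (hpper : Periodic p 1) (hppos : ∀ x, 0 < p x)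
    (hb : ∀ i, ContDiff ℝ 1 (b i)) (hbper : ∀ i, Periodic (b i) 1)
    (hli : ∃ i₁ i₂ : I, LinearIndependent ℝ ![b i₁, b i₂]) :
    0 < ∑ i, dissipation (b i) p := by
  obtain ⟨i₁, i₂, hli⟩ := hli
  have hnonneg : ∀ i, 0 ≤ dissipation (b i) p := fun i =>
    integral_nonneg zero_le_one fun x _ => div_nonneg (sq_nonneg _) (hppos x).le
  refine (sum_nonneg fun i _ => hnonneg i).lt_of_ne fun h => ?_
  have hconst : ∀ i x, b i x * p x = b i 0 * p 0 := fun i x =>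
    eq_of_integral_sq_deriv_div_eq_zero (fun x => by simp only [hbper i x, hpper x]) hpper one_pos
      ((hb i).mul hp) hp.continuous hppos
      ((sum_eq_zero_iff_of_nonneg fun i _ => hnonneg i).mp h.symm i (mem_univ i)) x 0
  exact not_linearIndependent_pair_of_mul_eq_const (fun x => (hppos x).ne') (hconst i₁) (hconst i₂)
    hli

end FokkerPlanck

theorem lyapunov_exponent_negative_general
    {I : Type*} [Fintype I]
    (p a : ℝ → ℝ) (ctilde : ℝ) (b : I → ℝ → ℝ)
    (hp : ContDiff ℝ 2 p) (hpper : ∀ x, p (x + 1) = p x) (hppos : ∀ x, 0 < p x)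
    (ha : ContDiff ℝ 1 a)
    (hb : ∀ i, ContDiff ℝ 2 (b i)) (hbper : ∀ i, ∀ x, b i (x + 1) = b i x)
    (hFP : ∀ x : ℝ,
      (1/2) * deriv (deriv (fun y => (∑ i, (b i y) ^ 2) * p y)) x
        = deriv (fun y => (ctilde + a y) * p y) x)
    (hli : ∃ i₁ i₂ : I, LinearIndependent ℝ ![b i₁, b i₂]) :
    (∫ x in (0:ℝ)..1, (deriv a x - (1/2) * ∑ i, (deriv (b i) x) ^ 2) * p x) < 0 := by
  rw [integral_lyapunov_eq_neg_half_sum_dissipation hp hpper hppos ha hb hbper hFP]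
  have hpos := sum_dissipation_pos (hp.of_le one_le_two) hpper hppos
    (fun i => (hb i).of_le one_le_two) hbper hli
  linarith

/-- Deterministic core of Corollary 4.2 (negativity of the Lyapunov exponent):
if the stationary Fokker–Planck equation `(1/2)(Σᵢ bᵢ² p)'' = ((c̃ + a) p)'` holds with
a positive `C²` 1-periodic density `p` of unit mass, and two of the `bᵢ` are linearly
independent, then `∫₀¹ (a' − (1/2) Σᵢ (bᵢ')²) p < 0`. -/
theorem lyapunov_exponent_negative
    {I : Type*} [Fintype I]
    (p a : ℝ → ℝ) (ctilde : ℝ) (b : I → ℝ → ℝ)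
    (hp : ContDiff ℝ 2 p) (hpper : ∀ x, p (x + 1) = p x) (hppos : ∀ x, 0 < p x)
    (hpmass : ∫ x in (0:ℝ)..1, p x = 1)
    (ha : ContDiff ℝ 1 a) (haper : ∀ x, a (x + 1) = a x)
    (hb : ∀ i, ContDiff ℝ 2 (b i)) (hbper : ∀ i, ∀ x, b i (x + 1) = b i x)
    (hFP : ∀ x : ℝ,
      (1/2) * deriv (deriv (fun y => (∑ i, (b i y) ^ 2) * p y)) x
        = deriv (fun y => (ctilde + a y) * p y) x)
    (hli : ∃ i₁ i₂ : I, LinearIndependent ℝ ![b i₁, b i₂]) :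
    (∫ x in (0:ℝ)..1, (deriv a x - (1/2) * ∑ i, (deriv (b i) x) ^ 2) * p x) < 0 :=
  lyapunov_exponent_negative_general p a ctilde b hp hpper hppos ha hb hbper hFP hli
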